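/- arXiv:1810.00765 — 4 statements merged into one kernel-verified Lean document; each statement's English description precedes it below -/
import Mathlib

section
/- Let F be a field of characteristic not equal to 2, with the quadratic form ‖v‖ = v₁² + v₂² on F². If a ≠ b in F² and ‖a-b‖ = 0, then either ‖a‖ = ‖b‖ = 0 or ‖a‖ ≠ ‖b‖. -/
/-!
Put `d = a - b`, an isotropic vector. If `‖a‖ = ‖b‖`, expanding `‖b + d‖` shows (since `2 ≠ 0`)
that `b` is orthogonal to `d`. In the plane the orthogonal complement of an isotropic line is
that line itself, so `b` is isotropic too.
-/

noncomputable section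

def nrm {F : Type*} [Field F] (v : F × F) : F := v.1 ^ 2 + v.2 ^ 2

section

variable {F : Type*} [Field F]

theorem nrm_add (u v : F × F) :
    nrm (u + v) = nrm u + nrm v + 2 * (u.1 * v.1 + u.2 * v.2) := by
  simp only [nrm, Prod.fst_add, Prod.snd_add]
  ring

theorem fst_ne_zero_of_nrm_eq_zero {d : F × F} (hd : d ≠ 0) (h : nrm d = 0) : d.1 ≠ 0 := by
  intro h1
  have h2 : d.2 = 0 := pow_eq_zero_iff two_ne_zero |>.mp (by simpa [nrm, h1] using h)
  exact hd (Prod.ext h1 h2)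

theorem nrm_eq_zero_of_orthogonal_isotropic {b d : F × F} (hd : d ≠ 0) (h : nrm d = 0)
    (horth : b.1 * d.1 + b.2 * d.2 = 0) : nrm b = 0 := by
  have key : nrm b * d.1 ^ 2 = 0 := by
    unfold nrm at h ⊢
    linear_combination (b.1 * d.1 - b.2 * d.2) * horth + b.2 ^ 2 * h
  exact (mul_eq_zero.mp key).resolve_right (pow_ne_zero 2 (fst_ne_zero_of_nrm_eq_zero hd h))

end

/-- if `a ≠ b` and `‖a - b‖ = 0`, then either `‖a‖ = ‖b‖ = 0`
or `‖a‖ ≠ ‖b‖`. -/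
theorem stmt_0 {F : Type*} [Field F] (hchar : (2 : F) ≠ 0)
    (a b : F × F) (hab : a ≠ b) (h0 : nrm (a - b) = 0) :
    (nrm a = 0 ∧ nrm b = 0) ∨ nrm a ≠ nrm b := by
  rw [or_iff_not_imp_right, not_not]
  intro heq
  have hexpand := nrm_add b (a - b)
  rw [add_sub_cancel, heq, h0] at hexpand
  have horth : b.1 * (a - b).1 + b.2 * (a - b).2 = 0 :=
    (mul_eq_zero.mp (by linear_combination -hexpand)).resolve_left hchar
  have hb := nrm_eq_zero_of_orthogonal_isotropic (sub_ne_zero.mpr hab) h0 horth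
  exact ⟨heq.trans hb, hb⟩
end
end

section
/- Let F be a field of characteristic not equal to 2, with the quadratic form ‖v‖ = v₁² + v₂² and bilinear form a·b = a₁b₁ + a₂b₂ on F². If a ≠ b, ‖a‖ = ‖b‖ ≠ 0, c ≠ 0 and ‖c‖ = 0, then ‖a - c‖ ≠ ‖b - c‖. -/
/-!
Expanding `‖a - c‖ = ‖a‖ - 2 a·c + ‖c‖` turns the hypothesis into `(a - b)·c = 0`.
For a nonzero isotropic `c` in the plane, `c^⊥` is the line `F c` (it contains `c` and is
one-dimensional), so `a - b = t c` with `t ≠ 0`. Then `‖b‖ = ‖a - t c‖ = ‖a‖ - 2t a·c`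
forces `a·c = 0`, so `a` lies on the isotropic line `F c` too and `‖a‖ = 0`.
-/

noncomputable section

/-- The associated bilinear form on `F × F`. -/
def dotp {F : Type*} [Field F] (a b : F × F) : F := a.1 * b.1 + a.2 * b.2

section Plane

variable {F : Type*} [Field F]

theorem nrm_sub (a c : F × F) : nrm (a - c) = nrm a - 2 * dotp a c + nrm c := by
  simp only [nrm, dotp, Prod.fst_sub, Prod.snd_sub]
  ring

theorem nrm_smul (t : F) (c : F × F) : nrm (t • c) = t ^ 2 * nrm c := by
  simp only [nrm, Prod.smul_fst, Prod.smul_snd, smul_eq_mul]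
  ring

theorem dotp_smul_right (a : F × F) (t : F) (c : F × F) : dotp a (t • c) = t * dotp a c := by
  simp only [dotp, Prod.smul_fst, Prod.smul_snd, smul_eq_mul]
  ring

theorem dotp_sub_left (a b c : F × F) : dotp (a - b) c = dotp a c - dotp b c := by
  simp only [dotp, Prod.fst_sub, Prod.snd_sub]
  ring

theorem fst_ne_zero_of_nrm_eq_zero_s1 {c : F × F} (hc : c ≠ 0) (hc0 : nrm c = 0) : c.1 ≠ 0 := by
  intro h1
  have h2 : c.2 ^ 2 = 0 := by
    unfold nrm at hc0
    rwa [h1, zero_pow two_ne_zero, zero_add] at hc0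
  exact hc (Prod.ext h1 (pow_eq_zero_iff two_ne_zero |>.mp h2))

theorem exists_eq_smul_of_dotp_eq_zero {c v : F × F} (hc : c ≠ 0) (hc0 : nrm c = 0)
    (hv : dotp v c = 0) : ∃ t : F, v = t • c := by
  have hc1 := fst_ne_zero_of_nrm_eq_zero_s1 hc hc0
  unfold nrm at hc0
  unfold dotp at hv
  -- multiply `v·c = 0` by `c₂` and use `c₂² = -c₁²`
  have hcross : v.2 * c.1 = v.1 * c.2 :=
    mul_left_cancel₀ hc1 (by linear_combination v.2 * hc0 - c.2 * hv)
  refine ⟨v.1 / c.1, Prod.ext ?_ ?_⟩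
  · simp only [Prod.smul_fst, smul_eq_mul]
    field_simp
  · simp only [Prod.smul_snd, smul_eq_mul]
    field_simp
    linear_combination hcross

theorem dotp_eq_of_nrm_sub_eq (hchar : (2 : F) ≠ 0) {a b c : F × F} (habn : nrm a = nrm b)
    (h : nrm (a - c) = nrm (b - c)) : dotp a c = dotp b c := by
  rw [nrm_sub, nrm_sub, habn] at h
  exact mul_left_cancel₀ hchar (by linear_combination -h)

end Plane

/-- if `a ≠ b`, `‖a‖ = ‖b‖ ≠ 0`, `c ≠ 0` and `‖c‖ = 0`,
then `‖a - c‖ ≠ ‖b - c‖`. -/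
theorem stmt_1 {F : Type*} [Field F] (hchar : (2 : F) ≠ 0)
    (a b c : F × F) (hab : a ≠ b) (habn : nrm a = nrm b) (ha0 : nrm a ≠ 0)
    (hc : c ≠ 0) (hc0 : nrm c = 0) :
    nrm (a - c) ≠ nrm (b - c) := by
  intro h
  have hdot := dotp_eq_of_nrm_sub_eq hchar habn h
  obtain ⟨t, ht⟩ := exists_eq_smul_of_dotp_eq_zero hc hc0
    (by rw [dotp_sub_left, hdot, sub_self] : dotp (a - b) c = 0)
  have ht0 : t ≠ 0 := by
    rintro rfl
    exact hab (sub_eq_zero.mp (by rwa [zero_smul] at ht))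
  have hac : dotp a c = 0 := by
    have hb : nrm b = nrm a - 2 * (t * dotp a c) := by
      rw [show b = a - t • c by rw [← ht, sub_sub_cancel], nrm_sub, dotp_smul_right,
        nrm_smul, hc0, mul_zero, add_zero]
    have : (2 * t) * dotp a c = 0 := by linear_combination habn + hb
    exact (mul_eq_zero.mp this).resolve_left (mul_ne_zero hchar ht0)
  obtain ⟨s, rfl⟩ := exists_eq_smul_of_dotp_eq_zero hc hc0 hac
  exact ha0 (by rw [nrm_smul, hc0, mul_zero])
end
end

section
/- Let F be a field of characteristic not equal to 2. Suppose ℓ ⊂ F² is the perpendicular bisector of a pair of points a ≠ b with ‖a - b‖ ≠ 0, i.e. ℓ = {x ∈ F² : ‖a - x‖ = ‖b - x‖}, and suppose ℓ is a line. Then ℓ is not isotropic; that is, for any two distinct points p, q ∈ ℓ, ‖p - q‖ ≠ 0. -/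
/-!
Two points `p, q` of the bisector of `a, b` satisfy `(a - b) · (p - q) = 0`. For a
non-isotropic `u` and `v` with `u · v = 0`, Lagrange's identity
`‖u‖ ‖v‖ = (u · v)² + det(u, v)²` shows that `‖v‖ = 0` forces `det(u, v) = 0`, and the two
linear conditions on `v` then give `v = 0`.
-/

noncomputable section

def dot {F : Type*} [Field F] (u v : F × F) : F := u.1 * v.1 + u.2 * v.2

section

variable {F : Type*} [Field F]

theorem nrm_sub_sub_nrm_sub (a b x : F × F) :
    nrm (a - x) - nrm (b - x) = nrm a - nrm b - 2 * dot (a - b) x := by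
  simp only [nrm, dot, Prod.fst_sub, Prod.snd_sub]
  ring

theorem dot_sub_eq_zero_of_nrm_sub_eq {a b p q : F × F} (hchar : (2 : F) ≠ 0)
    (hp : nrm (a - p) = nrm (b - p)) (hq : nrm (a - q) = nrm (b - q)) :
    dot (a - b) (p - q) = 0 := by
  have hp' := nrm_sub_sub_nrm_sub a b p
  have hq' := nrm_sub_sub_nrm_sub a b q
  rw [hp, sub_self] at hp'
  rw [hq, sub_self] at hq'
  have h2 : 2 * dot (a - b) (p - q) = 0 := by
    simp only [dot, Prod.fst_sub, Prod.snd_sub] at hp' hq' ⊢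
    linear_combination hp' - hq'
  exact (mul_eq_zero.mp h2).resolve_left hchar

theorem nrm_mul_nrm (u v : F × F) :
    nrm u * nrm v = dot u v ^ 2 + (u.1 * v.2 - u.2 * v.1) ^ 2 := by
  simp only [nrm, dot]
  ring

theorem eq_zero_of_dot_eq_zero_of_nrm_eq_zero {u v : F × F} (hu : nrm u ≠ 0)
    (hdot : dot u v = 0) (hv : nrm v = 0) : v = 0 := by
  have hdet : u.1 * v.2 - u.2 * v.1 = 0 := by
    have := nrm_mul_nrm u v
    rw [hv, hdot, mul_zero] at this
    exact pow_eq_zero_iff two_ne_zero |>.mp (by linear_combination -this)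
  have h1 : nrm u * v.1 = 0 := by
    simp only [nrm, dot] at hdot ⊢
    linear_combination u.1 * hdot - u.2 * hdet
  have h2 : nrm u * v.2 = 0 := by
    simp only [nrm, dot] at hdot ⊢
    linear_combination u.2 * hdot + u.1 * hdet
  exact Prod.ext ((mul_eq_zero.mp h1).resolve_left hu) ((mul_eq_zero.mp h2).resolve_left hu)

end

theorem stmt_2_general {F : Type*} [Field F] (hchar : (2 : F) ≠ 0)
    (a b : F × F) (hab0 : nrm (a - b) ≠ 0)
    (ℓ : Set (F × F)) (hℓ : ℓ = {x | nrm (a - x) = nrm (b - x)}) :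
    ∀ p ∈ ℓ, ∀ q ∈ ℓ, p ≠ q → nrm (p - q) ≠ 0 := by
  subst hℓ
  intro p hp q hq hpq hpq0
  have hperp : dot (a - b) (p - q) = 0 := dot_sub_eq_zero_of_nrm_sub_eq hchar hp hq
  exact hpq (sub_eq_zero.mp (eq_zero_of_dot_eq_zero_of_nrm_eq_zero hab0 hperp hpq0))

/-- a perpendicular bisector is not isotropic: any two distinct
points `p, q` of the bisector of `a, b` satisfy `‖p - q‖ ≠ 0`. -/
theorem stmt_2 {F : Type*} [Field F] (hchar : (2 : F) ≠ 0)
    (a b : F × F) (hab : a ≠ b) (hab0 : nrm (a - b) ≠ 0)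
    (ℓ : Set (F × F)) (hℓ : ℓ = {x | nrm (a - x) = nrm (b - x)}) :
    ∀ p ∈ ℓ, ∀ q ∈ ℓ, p ≠ q → nrm (p - q) ≠ 0 :=
  stmt_2_general hchar a b hab0 ℓ hℓ
end
end

section
/- Let F be a field of characteristic not equal to 2, and let a, b ∈ F² with ‖a - b‖ ≠ 0. Then there exists a line ℓ (non-isotropic) and a reflection r_ℓ over ℓ with r_ℓ(a) = b; moreover, for any non-isotropic line ℓ, r_ℓ(a) = b if and only if ℓ is the perpendicular bisector B(a,b) = {x : ‖a-x‖ = ‖b-x‖}. -/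
/-!
Write the reflection as `x ↦ x - c • u` with `c = 2 (a·u / ‖u‖ - λ)`; it moves `a` to `b` iff
`a - b = c • u`. The line `lineOf u λ` is `u·x = λ ‖u‖` and the bisector is
`2 (a - b)·x = ‖a‖ - ‖b‖`, and two lines whose normal is non-isotropic coincide iff their
equations are proportional. So both conditions force `a - b = s • u`, and then the identity
`‖a‖ - ‖b‖ = s (2 a·u - s ‖u‖)` shows that the constant terms match exactly when `s = c`.
-/

noncomputable section

/-- Reflection over the line `{λ • u + v : u · v = 0}`, for `‖u‖ ≠ 0`. -/
def reflLine {F : Type*} [Field F] (u : F × F) (lam : F) (a : F × F) : F × F :=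
  a - (2 * dotp a u / nrm u) • u + (2 * lam) • u

/-- The (non-isotropic) line `{λ • u + v : u · v = 0}`. -/
def lineOf {F : Type*} [Field F] (u : F × F) (lam : F) : Set (F × F) :=
  {x | ∃ v, dotp u v = 0 ∧ x = lam • u + v}

/-- The perpendicular bisector of `a` and `b`. -/
def bisector {F : Type*} [Field F] (a b : F × F) : Set (F × F) :=
  {x | nrm (a - x) = nrm (b - x)}

namespace PlaneReflection

variable {F : Type*} [Field F]

def perp (p : F × F) : F × F := (-p.2, p.1)

lemma dotp_perp (p : F × F) : dotp p (perp p) = 0 := by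
  simp only [dotp, perp]; ring

lemma dotp_self (p : F × F) : dotp p p = nrm p := by
  simp only [dotp, nrm]; ring

lemma dotp_add_right (p x y : F × F) : dotp p (x + y) = dotp p x + dotp p y := by
  simp only [dotp, Prod.fst_add, Prod.snd_add]; ring

lemma dotp_smul_left (t : F) (p x : F × F) : dotp (t • p) x = t * dotp p x := by
  simp only [dotp, Prod.smul_fst, Prod.smul_snd, smul_eq_mul]; ring

lemma dotp_smul_right (t : F) (p x : F × F) : dotp p (t • x) = t * dotp p x := by
  simp only [dotp, Prod.smul_fst, Prod.smul_snd, smul_eq_mul]; ring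

lemma eq_smul_of_dotp_perp_eq_zero {p q : F × F} (hp : nrm p ≠ 0)
    (h : dotp q (perp p) = 0) : q = (dotp q p / nrm p) • p := by
  simp only [dotp, perp, nrm] at hp h ⊢
  ext <;> simp only [Prod.smul_fst, Prod.smul_snd, smul_eq_mul] <;> field_simp
  · linear_combination (-p.2) * h
  · linear_combination p.1 * h

lemma setOf_dotp_eq_setOf_dotp_iff {p q : F × F} {α β : F} (hp : nrm p ≠ 0) :
    {x | dotp p x = α} = {x | dotp q x = β} ↔ ∃ t ≠ 0, q = t • p ∧ β = t * α := by
  constructor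
  · intro h
    have mem x : dotp p x = α ↔ dotp q x = β := Set.ext_iff.mp h x
    set x₀ := (α / nrm p) • p
    have hx₀ : dotp p x₀ = α := by
      rw [dotp_smul_right, dotp_self, div_mul_cancel₀ _ hp]
    have hβ₀ : dotp q x₀ = β := (mem x₀).mp hx₀
    have hperp : dotp q (perp p) = 0 := by
      have h' := (mem (x₀ + perp p)).mp (by rw [dotp_add_right, hx₀, dotp_perp, add_zero])
      rwa [dotp_add_right, hβ₀, add_eq_left] at h'
    have hq := eq_smul_of_dotp_perp_eq_zero hp hperp
    set t := dotp q p / nrm p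
    have hβ : β = t * α := by rw [← hβ₀, hq, dotp_smul_left, hx₀]
    refine ⟨t, fun ht => hp ?_, hq, hβ⟩
    have h' := (mem (x₀ + p)).mpr (by rw [hq, hβ, dotp_smul_left, ht, zero_mul, zero_mul])
    rwa [dotp_add_right, hx₀, dotp_self, add_eq_left] at h'
  · rintro ⟨t, ht, rfl, rfl⟩
    ext x
    simp only [Set.mem_ofPred_eq, dotp_smul_left, mul_right_inj' ht]

lemma lineOf_eq_setOf (u : F × F) (lam : F) :
    lineOf u lam = {x | dotp u x = lam * nrm u} := by
  ext x
  constructor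
  · rintro ⟨v, hv, rfl⟩
    rw [Set.mem_ofPred_eq, dotp_add_right, dotp_smul_right, dotp_self, hv, add_zero]
  · intro hx
    refine ⟨x - lam • u, ?_, by abel⟩
    simp only [Set.mem_ofPred_eq, dotp, nrm, Prod.fst_sub, Prod.snd_sub, Prod.smul_fst,
      Prod.smul_snd, smul_eq_mul] at hx ⊢
    linear_combination hx

lemma bisector_eq_setOf (a b : F × F) :
    bisector a b = {x | dotp ((2 : F) • (a - b)) x = nrm a - nrm b} := by
  ext x
  simp only [bisector, Set.mem_ofPred_eq, nrm, dotp, Prod.fst_sub, Prod.snd_sub, Prod.smul_fst,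
    Prod.smul_snd, smul_eq_mul]
  constructor <;> intro h <;> linear_combination -h

lemma reflLine_eq_sub_smul (u : F × F) (lam : F) (a : F × F) :
    reflLine u lam a = a - (2 * (dotp a u / nrm u - lam)) • u := by
  rw [reflLine, mul_sub, mul_div_assoc, sub_smul]; abel

lemma nrm_sub_nrm_of_sub_eq_smul {a b u : F × F} {s : F} (h : a - b = s • u) :
    nrm a - nrm b = s * (2 * dotp a u - s * nrm u) := by
  obtain rfl : b = a - s • u := by rw [← h, sub_sub_cancel]
  simp only [nrm, dotp, Prod.fst_sub, Prod.snd_sub, Prod.smul_fst, Prod.smul_snd, smul_eq_mul]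
  ring

lemma reflLine_eq_iff (u : F × F) (lam : F) (a b : F × F) :
    reflLine u lam a = b ↔ a - b = (2 * (dotp a u / nrm u - lam)) • u := by
  rw [reflLine_eq_sub_smul]
  exact sub_eq_iff_comm

lemma exists_reflLine_eq (hchar : (2 : F) ≠ 0) {a b : F × F} (hab : nrm (a - b) ≠ 0) :
    ∃ u lam, nrm u ≠ 0 ∧ reflLine u lam a = b := by
  refine ⟨a - b, dotp a (a - b) / nrm (a - b) - 1 / 2, hab, ?_⟩
  rw [reflLine_eq_iff, sub_sub_cancel, mul_one_div_cancel hchar, one_smul]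

lemma reflLine_eq_iff_lineOf_eq_bisector (hchar : (2 : F) ≠ 0) {a b u : F × F} (lam : F)
    (hab : nrm (a - b) ≠ 0) (hu : nrm u ≠ 0) :
    reflLine u lam a = b ↔ lineOf u lam = bisector a b := by
  have hab₀ : a - b ≠ 0 := fun h => hab (by simp [h, nrm])
  rw [lineOf_eq_setOf, bisector_eq_setOf, setOf_dotp_eq_setOf_dotp_iff hu, reflLine_eq_iff]
  set c := 2 * (dotp a u / nrm u - lam) with hc
  have key {s : F} (h : a - b = s • u) :
      s = c ↔ nrm a - nrm b = 2 * s * (lam * nrm u) := by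
    have hs : s ≠ 0 := by rintro rfl; exact hab₀ (by rw [h, zero_smul])
    rw [nrm_sub_nrm_of_sub_eq_smul h, hc]
    constructor
    · rintro rfl; field_simp; ring
    · intro h'
      have h'' : 2 * dotp a u - s * nrm u = 2 * lam * nrm u :=
        mul_left_cancel₀ hs (by linear_combination h')
      field_simp
      linear_combination -h''
  constructor
  · intro h
    have hc₀ : c ≠ 0 := by rintro hc₀; exact hab₀ (by rw [h, hc₀, zero_smul])
    refine ⟨2 * c, mul_ne_zero hchar hc₀, by rw [h, smul_smul], ?_⟩
    exact (key h).mp rfl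
  · rintro ⟨t, -, h2, hn⟩
    have h : a - b = (t / 2) • u := by
      rw [div_eq_inv_mul, ← smul_smul, ← h2, smul_smul, inv_mul_cancel₀ hchar, one_smul]
    rw [h, (key h).mpr (by rw [hn, mul_div_cancel₀ _ hchar])]

end PlaneReflection

/-- for `‖a - b‖ ≠ 0` there is a reflection taking `a` to `b`;
moreover a reflection over a non-isotropic line takes `a` to `b` iff the line
is the perpendicular bisector of `a` and `b`. -/
theorem stmt_3 {F : Type*} [Field F] (hchar : (2 : F) ≠ 0)
    (a b : F × F) (hab : nrm (a - b) ≠ 0) :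
    (∃ u lam, nrm u ≠ 0 ∧ reflLine u lam a = b) ∧
    (∀ u lam, nrm u ≠ 0 → (reflLine u lam a = b ↔ lineOf u lam = bisector a b)) := by
  exact ⟨PlaneReflection.exists_reflLine_eq hchar hab, fun u lam hu =>
    PlaneReflection.reflLine_eq_iff_lineOf_eq_bisector hchar lam hab hu⟩
end
end
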